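/- arXiv:2005.13276 — 2 statements merged into one kernel-verified Lean document; each statement's English description precedes it below -/
import Mathlib

section
/- For all natural numbers k ≤ n, the polynomial identity (1+y) · ∑_{i=0}^{k} C(k+1, i) (-y)^i (1+y)^{k-i} (1-t)^{n-k+i} - (1 - (-y)^{k+1}) (1-t)^{n+1} = (1-t)^{n-k} (1+yt)^{k+1} - (1-t)^{n+1} holds in ℤ[y, t]. -/
open MvPolynomial

/-- for `k ≤ n`, in `ℤ[y,t]`,
`(1+y)·∑_{i=0}^k C(k+1,i)(-y)^i(1+y)^{k-i}(1-t)^{n-k+i} - (1-(-y)^{k+1})(1-t)^{n+1}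
  = (1-t)^{n-k}(1+yt)^{k+1} - (1-t)^{n+1}`. -/
theorem proj_to_affine_motivic_chern_Pk (n k : ℕ) (hkn : k ≤ n) :
    let y : MvPolynomial (Fin 2) ℤ := X 0
    let t : MvPolynomial (Fin 2) ℤ := X 1
    (1 + y) * ∑ i ∈ Finset.range (k + 1),
        (((k + 1).choose i : ℤ) : MvPolynomial (Fin 2) ℤ) * (-y) ^ i * (1 + y) ^ (k - i) *
          (1 - t) ^ (n - k + i) -
      (1 - (-y) ^ (k + 1)) * (1 - t) ^ (n + 1) =
    (1 - t) ^ (n - k) * (1 + y * t) ^ (k + 1) - (1 - t) ^ (n + 1) := by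
  intro y t
  have h : (1 + y * t) = (-y * (1 - t)) + (1 + y) := by ring
  rw [h, add_pow, Finset.sum_range_succ (n := k+1), Finset.mul_sum]
  have hsum : ∑ i ∈ Finset.range (k + 1),
      (1 + y) * ((((k + 1).choose i : ℤ) : MvPolynomial (Fin 2) ℤ) * (-y) ^ i *
        (1 + y) ^ (k - i) * (1 - t) ^ (n - k + i)) =
      ∑ i ∈ Finset.range (k + 1),
      (1 - t) ^ (n - k) * ((-y * (1 - t)) ^ i * (1 + y) ^ (k + 1 - i) *
        (((k + 1).choose i : ℤ) : MvPolynomial (Fin 2) ℤ)) := by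
    refine Finset.sum_congr rfl fun i hi => ?_
    have hik : i ≤ k := Nat.lt_succ_iff.mp (Finset.mem_range.mp hi)
    have h1 : k + 1 - i = (k - i) + 1 := by omega
    have h2 : n - k + i = (n - k) + i := rfl
    rw [h1, h2, mul_pow, pow_add, pow_succ]
    ring
  rw [hsum, ← Finset.mul_sum, mul_add]
  have hlast : (1 - t) ^ (n - k) * ((-y * (1 - t)) ^ (k + 1) * (1 + y) ^ (k + 1 - (k + 1)) *
      (((k + 1).choose (k + 1) : ℤ) : MvPolynomial (Fin 2) ℤ)) =
      (-y) ^ (k + 1) * (1 - t) ^ (n + 1) := by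
    have : n + 1 = (n - k) + (k + 1) := by omega
    rw [this, Nat.sub_self, Nat.choose_self, mul_pow, pow_add]
    push_cast
    ring
  push_cast at hlast ⊢
  rw [hlast]
  ring
end

section
/- Let k be a field, S = k[x_0, …, x_n] standardly graded, and M a finitely generated nonnegatively graded S-module. Then there exists a polynomial p ∈ ℚ[m] and a bound N such that dim_k M_j = p(j) for all j ≥ N (the Hilbert polynomial of M). -/
/-!
Multiplication by a variable `x` gives, in each degree `t`, an exact sequence of `k`-vector spaces
`0 → K_t → M_t → M_{t+1} → C_{t+1} → 0`, where `K` and `C` are the kernel and the cokernel of `x`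
on `M`. They are again finitely generated graded modules (the polynomial ring is Noetherian), now
killed by `x`. By induction on the set of variables that act nontrivially, the difference
`dim M_{t+1} - dim M_t = dim C_{t+1} - dim K_t` is eventually polynomial, hence so is `dim M_t`,
since polynomials have polynomial antiderivatives (Bernoulli polynomials). When no variable acts,
`M` is finite-dimensional and `M_t = 0` for large `t`. The same exact sequence shows, by induction
on `t`, that every `M_t` is finite-dimensional.
-/

open DirectSum LinearMap Module Function Polynomial Filter

theorem Polynomial.exists_eval_add_one_sub_eval (p : ℚ[X]) :
    ∃ q : ℚ[X], ∀ x : ℚ, q.eval (x + 1) - q.eval x = p.eval x := by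
  induction p using Polynomial.induction_on' with
  | add p q hp hq =>
    obtain ⟨a, ha⟩ := hp
    obtain ⟨b, hb⟩ := hq
    exact ⟨a + b, fun x => by simp only [eval_add, ← ha, ← hb]; ring⟩
  | monomial n c =>
    refine ⟨C (c / (n + 1)) * bernoulli (n + 1), fun x => ?_⟩
    simp only [eval_mul, eval_C, eval_monomial, add_comm x 1, bernoulli_eval_one_add]
    field_simp
    push_cast
    ring

def IsEventuallyPolynomial (f : ℕ → ℚ) : Prop :=
  ∃ p : ℚ[X], ∀ᶠ j in atTop, f j = p.eval (j : ℚ)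

namespace IsEventuallyPolynomial

variable {f g : ℕ → ℚ}

theorem sub (hf : IsEventuallyPolynomial f) (hg : IsEventuallyPolynomial g) :
    IsEventuallyPolynomial (f - g) := by
  obtain ⟨p, hp⟩ := hf
  obtain ⟨q, hq⟩ := hg
  exact ⟨p - q, hp.and hq |>.mono fun j h => by simp [h.1, h.2]⟩

theorem comp_succ (hf : IsEventuallyPolynomial f) :
    IsEventuallyPolynomial fun j => f (j + 1) := by
  obtain ⟨p, hp⟩ := hf
  exact ⟨p.comp (X + 1), (tendsto_add_atTop_nat 1).eventually hp |>.mono fun j h => by simp [h]⟩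

open fwdDiff in
theorem of_fwdDiff (h : IsEventuallyPolynomial (Δ_[1] f)) : IsEventuallyPolynomial f := by
  obtain ⟨p, hp⟩ := h
  obtain ⟨q, hq⟩ := p.exists_eval_add_one_sub_eval
  obtain ⟨N, hN⟩ := eventually_atTop.1 hp
  refine ⟨q + C (f N - q.eval (N : ℚ)), eventually_atTop.2 ⟨N, fun j hj => ?_⟩⟩
  induction j, hj using Nat.le_induction with
  | base => simp
  | succ j hj ih =>
    have hstep : f (j + 1) - f j = p.eval (j : ℚ) := hN j hj
    simp only [eval_add, eval_C, Nat.cast_succ] at ih ⊢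
    linarith [hq j]

end IsEventuallyPolynomial

section Shift

variable {R V : Type*} [Semiring R] [AddCommMonoid V] [Module R V]
  {𝒱 : ℕ → Submodule R V} [Decomposition 𝒱] {f : V →ₗ[R] V} {d : ℕ}

theorem coe_decompose_map_add (hf : ∀ t, 𝒱 t ≤ (𝒱 (t + d)).comap f) (m : V) (t : ℕ) :
    (decompose 𝒱 (f m) (t + d) : V) = f (decompose 𝒱 m t) := by
  induction m using Decomposition.inductionOn 𝒱 with
  | zero => simp
  | @homogeneous u m =>
    obtain ⟨m, hm⟩ := m
    have hfm : f m ∈ 𝒱 (u + d) := hf u hm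
    obtain rfl | hu := eq_or_ne u t
    · rw [decompose_of_mem_same _ hm, decompose_of_mem_same _ hfm]
    · rw [decompose_of_mem_ne _ hm hu, decompose_of_mem_ne _ hfm (by omega), map_zero]
  | add m m' hm hm' => simp [decompose_add, hm, hm']

theorem coe_decompose_map_of_lt (hf : ∀ t, 𝒱 t ≤ (𝒱 (t + d)).comap f) (m : V) {t : ℕ}
    (ht : t < d) : (decompose 𝒱 (f m) t : V) = 0 := by
  induction m using Decomposition.inductionOn 𝒱 with
  | zero => simp
  | @homogeneous u m => exact decompose_of_mem_ne _ (hf u m.2) (by omega)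
  | add m m' hm hm' => simp [decompose_add, hm, hm']

theorem isHomogeneous_ker (hf : ∀ t, 𝒱 t ≤ (𝒱 (t + d)).comap f) : (ker f).IsHomogeneous 𝒱 :=
  fun t m hm => by
    rw [LinearMap.mem_ker, ← coe_decompose_map_add hf, LinearMap.mem_ker.1 hm]
    simp

theorem isHomogeneous_range (hf : ∀ t, 𝒱 t ≤ (𝒱 (t + d)).comap f) :
    (range f).IsHomogeneous 𝒱 := by
  rintro t _ ⟨m, rfl⟩
  rcases lt_or_ge t d with ht | ht
  · rw [coe_decompose_map_of_lt hf m ht]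
    exact zero_mem _
  · obtain ⟨t, rfl⟩ := Nat.exists_eq_add_of_le' ht
    rw [coe_decompose_map_add hf]
    exact mem_range_self f _

theorem inf_range_eq_map (hf : ∀ t, 𝒱 t ≤ (𝒱 (t + d)).comap f) (t : ℕ) :
    𝒱 (t + d) ⊓ range f = (𝒱 t).map f := by
  refine le_antisymm ?_ (le_inf (Submodule.map_le_iff_le_comap.2 (hf t)) (map_le_range))
  rintro _ ⟨hm, m, rfl⟩
  rw [← decompose_of_mem_same 𝒱 hm, coe_decompose_map_add hf]
  exact Submodule.mem_map_of_mem (decompose 𝒱 m t).2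

theorem inf_range_eq_bot (hf : ∀ t, 𝒱 t ≤ (𝒱 (t + d)).comap f) {t : ℕ} (ht : t < d) :
    𝒱 t ⊓ range f = ⊥ := by
  refine eq_bot_iff.2 ?_
  rintro _ ⟨hm, m, rfl⟩
  rw [Submodule.mem_bot, ← decompose_of_mem_same 𝒱 hm, coe_decompose_map_of_lt hf m ht]

end Shift

section Internal

variable {R U V W : Type*} [Ring R] [AddCommGroup U] [AddCommGroup V] [AddCommGroup W]
  [Module R U] [Module R V] [Module R W] {𝒱 : ℕ → Submodule R V} [Decomposition 𝒱]

theorem Submodule.IsHomogeneous.iSup_inf_eq {p : Submodule R V} (hp : p.IsHomogeneous 𝒱) :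
    ⨆ t, p ⊓ 𝒱 t = p := by
  classical
  refine le_antisymm (iSup_le fun _ => inf_le_left) fun m hm => ?_
  rw [← sum_support_decompose 𝒱 m]
  exact Submodule.sum_mem _ fun t _ => Submodule.mem_iSup_of_mem t ⟨hp t hm, (decompose 𝒱 m t).2⟩

theorem coe_decompose_eq_zero_of_mem_iSup_ne {t : ℕ} {w : V}
    (hw : w ∈ ⨆ (u) (_ : u ≠ t), 𝒱 u) : (decompose 𝒱 w t : V) = 0 := by
  let proj : V →ₗ[R] V :=
    (𝒱 t).subtype ∘ₗ component R ℕ (fun u => 𝒱 u) t ∘ₗ (decomposeLinearEquiv 𝒱).toLinearMap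
  have hproj (m : V) : proj m = decompose 𝒱 m t := rfl
  have hle : ⨆ (u) (_ : u ≠ t), 𝒱 u ≤ ker proj := iSup₂_le fun u hu m hm => by
    rw [LinearMap.mem_ker, hproj, decompose_of_mem_ne 𝒱 hm hu]
  rw [← hproj]
  exact hle hw

theorem isInternal_comap {ι : U →ₗ[R] V} (hι : Injective ι)
    (h : (range ι).IsHomogeneous 𝒱) : IsInternal fun t => (𝒱 t).comap ι := by
  rw [isInternal_submodule_iff_iSupIndep_and_iSup_eq_top]
  refine ⟨fun t => disjoint_iff_inf_le.2 ?_, Submodule.map_injective_of_injective hι ?_⟩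
  · rintro v ⟨hv, hv'⟩
    have hmap : (⨆ (u) (_ : u ≠ t), (𝒱 u).comap ι).map ι ≤ ⨆ (u) (_ : u ≠ t), 𝒱 u := by
      simp_rw [Submodule.map_iSup]
      exact iSup₂_mono fun u _ => Submodule.map_comap_le ι (𝒱 u)
    have hιv : ι v = 0 :=
      disjoint_iff_inf_le.1 ((Decomposition.isInternal 𝒱).submodule_iSupIndep t)
        ⟨hv, hmap (Submodule.mem_map_of_mem hv')⟩
    exact (Submodule.mem_bot R).2 (hι (hιv.trans (map_zero ι).symm))
  · simp_rw [Submodule.map_iSup, Submodule.map_comap_eq, Submodule.map_top, h.iSup_inf_eq]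

theorem isInternal_map {π : V →ₗ[R] W} (hπ : Surjective π)
    (h : (ker π).IsHomogeneous 𝒱) : IsInternal fun t => (𝒱 t).map π := by
  rw [isInternal_submodule_iff_iSupIndep_and_iSup_eq_top]
  refine ⟨fun t => disjoint_iff_inf_le.2 ?_, ?_⟩
  · simp_rw [← Submodule.map_iSup]
    rintro _ ⟨⟨m, hm, rfl⟩, w, hw, hwm⟩
    have hmw : m - w ∈ ker π := by rw [LinearMap.mem_ker, map_sub, hwm, sub_self]
    have := h t hmw
    rw [decompose_sub, DFinsupp.sub_apply, Submodule.coe_sub, decompose_of_mem_same 𝒱 hm,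
      coe_decompose_eq_zero_of_mem_iSup_ne hw, sub_zero] at this
    exact (Submodule.mem_bot R).2 (LinearMap.mem_ker.1 this)
  · rw [← Submodule.map_iSup, (Decomposition.isInternal 𝒱).submodule_iSup_eq_top,
      Submodule.map_top, range_eq_top.2 hπ]

end Internal

section Finrank

variable {k U V W : Type*} [Field k] [AddCommGroup U] [AddCommGroup V] [AddCommGroup W]
  [Module k U] [Module k V] [Module k W]

theorem Submodule.finrank_map_add_finrank_inf_ker (f : V →ₗ[k] W) (P : Submodule k V)
    [FiniteDimensional k P] : finrank k (P.map f) + finrank k ↥(P ⊓ ker f) = finrank k P := by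
  rw [← range_domRestrict, ← Submodule.map_comap_subtype, Submodule.finrank_map_subtype_eq,
    ← ker_domRestrict]
  exact finrank_range_add_finrank_ker _

theorem Submodule.finrank_comap_of_injective {f : U →ₗ[k] V} (hf : Injective f)
    (P : Submodule k V) : finrank k (P.comap f) = finrank k ↥(range f ⊓ P) := by
  rw [(Submodule.equivMapOfInjective f hf _).finrank_eq, Submodule.map_comap_eq]

/-- Finite-dimensionality is part of the notion because `finrank` is `0` on infinite-dimensional
spaces. -/
def HasHilbertPolynomial (𝒱 : ℕ → Submodule k V) : Prop :=
  (∀ j, FiniteDimensional k (𝒱 j)) ∧ IsEventuallyPolynomial fun j => finrank k (𝒱 j)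

theorem HasHilbertPolynomial.of_finiteDimensional [FiniteDimensional k V]
    (𝒱 : ℕ → Submodule k V) [Decomposition 𝒱] : HasHilbertPolynomial 𝒱 := by
  refine ⟨fun _ => inferInstance, 0, ?_⟩
  have hfin : {t | 𝒱 t ≠ ⊥}.Finite :=
    WellFoundedGT.finite_ne_bot_of_iSupIndep (Decomposition.isInternal 𝒱).submodule_iSupIndep
  filter_upwards [Nat.cofinite_eq_atTop ▸ hfin.eventually_cofinite_notMem] with t ht
  rw [not_not] at ht
  simp [ht]

variable {𝒱 : ℕ → Submodule k V} [Decomposition 𝒱] {μ : V →ₗ[k] V}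
  {ι : U →ₗ[k] V} {π : V →ₗ[k] W}

theorem finiteDimensional_of_map (hμ : ∀ t, 𝒱 t ≤ (𝒱 (t + 1)).comap μ)
    (hπ : ker π = range μ) (hW : ∀ t, FiniteDimensional k ((𝒱 t).map π)) (t : ℕ) :
    FiniteDimensional k (𝒱 t) := by
  have of_fg (t : ℕ) (h : (𝒱 t ⊓ range μ).FG) : FiniteDimensional k (𝒱 t) :=
    Module.Finite.iff_fg.2 <|
      Submodule.fg_of_fg_map_of_fg_inf_ker π (Module.Finite.iff_fg.1 (hW t)) (hπ ▸ h)
  induction t with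
  | zero => exact of_fg 0 (by rw [inf_range_eq_bot hμ zero_lt_one]; exact Submodule.fg_bot)
  | succ t ih =>
    exact of_fg (t + 1) (by rw [inf_range_eq_map hμ]; exact (Module.Finite.iff_fg.1 ih).map μ)

theorem finrank_succ_add_finrank_comap (hμ : ∀ t, 𝒱 t ≤ (𝒱 (t + 1)).comap μ)
    (hι : Injective ι) (hιμ : range ι = ker μ) (hπ : ker π = range μ) (t : ℕ)
    [FiniteDimensional k (𝒱 t)] [FiniteDimensional k (𝒱 (t + 1))] :
    finrank k (𝒱 (t + 1)) + finrank k ((𝒱 t).comap ι) =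
      finrank k ((𝒱 (t + 1)).map π) + finrank k (𝒱 t) := by
  have hμt := Submodule.finrank_map_add_finrank_inf_ker μ (𝒱 t)
  have hπt := Submodule.finrank_map_add_finrank_inf_ker π (𝒱 (t + 1))
  rw [hπ, inf_range_eq_map hμ] at hπt
  rw [Submodule.finrank_comap_of_injective hι, hιμ, inf_comm]
  omega

theorem HasHilbertPolynomial.of_comap_of_map (hμ : ∀ t, 𝒱 t ≤ (𝒱 (t + 1)).comap μ)
    (hι : Injective ι) (hιμ : range ι = ker μ) (hπ : ker π = range μ)
    (hU : HasHilbertPolynomial fun t => (𝒱 t).comap ι)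
    (hW : HasHilbertPolynomial fun t => (𝒱 t).map π) : HasHilbertPolynomial 𝒱 := by
  have hV := finiteDimensional_of_map hμ hπ hW.1
  refine ⟨hV, .of_fwdDiff ?_⟩
  convert hW.2.comp_succ.sub hU.2 using 1
  ext t
  rw [fwdDiff, Pi.sub_apply, sub_eq_sub_iff_add_eq_add]
  exact_mod_cast finrank_succ_add_finrank_comap hμ hι hιμ hπ t

end Finrank

section GradedSMul

variable {ιA ιB S R σA M N : Type*} [VAdd ιA ιB] [SetLike σA S] [CommSemiring R] [Semiring S]
  [Module R S] [AddCommMonoid M] [AddCommMonoid N] [Module S M] [Module S N] [Module R M]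
  [Module R N] [IsScalarTower R S M] [IsScalarTower R S N] {𝒜 : ιA → σA} {ℳ : ιB → Submodule R M}

theorem SetLike.GradedSMul.comap [SetLike.GradedSMul 𝒜 ℳ] (f : N →ₗ[S] M) :
    SetLike.GradedSMul 𝒜 fun t => (ℳ t).comap (f.restrictScalars R) :=
  ⟨fun _ _ s n hs hn => by simpa using SetLike.GradedSMul.smul_mem (B := ℳ) hs hn⟩

theorem SetLike.GradedSMul.map [SetLike.GradedSMul 𝒜 ℳ] (f : M →ₗ[S] N) :
    SetLike.GradedSMul 𝒜 fun t => (ℳ t).map (f.restrictScalars R) :=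
  ⟨fun _ _ s _ hs ⟨m, hm, hmn⟩ =>
    ⟨s • m, SetLike.GradedSMul.smul_mem (B := ℳ) hs hm, by simp [← hmn]⟩⟩

end GradedSMul

section MvPolynomial

open MvPolynomial

variable {σ k M : Type*} [Field k] [AddCommGroup M] [Module (MvPolynomial σ k) M] [Module k M]
  [IsScalarTower k (MvPolynomial σ k) M]

theorem smul_eq_constantCoeff_smul (h : ∀ i (m : M), (X i : MvPolynomial σ k) • m = 0)
    (s : MvPolynomial σ k) (m : M) : s • m = constantCoeff s • m := by
  induction s using MvPolynomial.induction_on with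
  | C a => rw [constantCoeff_C, ← algebraMap_eq, algebraMap_smul]
  | add p q hp hq => rw [add_smul, hp, hq, map_add, add_smul]
  | mul_X p i _ => rw [mul_smul, h, smul_zero, map_mul, constantCoeff_X, mul_zero, zero_smul]

theorem Module.Finite.of_forall_X_smul_eq_zero [Module.Finite (MvPolynomial σ k) M]
    (h : ∀ i (m : M), (X i : MvPolynomial σ k) • m = 0) : Module.Finite k M := by
  obtain ⟨G, hG⟩ := Module.Finite.fg_top (R := MvPolynomial σ k) (M := M)
  refine ⟨G, eq_top_iff.2 ?_⟩
  rintro m -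
  have hm : m ∈ Submodule.span (MvPolynomial σ k) (G : Set M) := hG ▸ Submodule.mem_top
  induction hm using Submodule.span_induction with
  | mem m hm => exact Submodule.subset_span hm
  | zero => exact zero_mem _
  | add _ _ _ _ h₁ h₂ => exact add_mem h₁ h₂
  | smul s m _ hm => exact smul_eq_constantCoeff_smul h s m ▸ Submodule.smul_mem _ _ hm

theorem hasHilbertPolynomial_of_forall_notMem_X_smul_eq_zero [Finite σ] (s : Finset σ) :
    ∀ (M : Type*) [AddCommGroup M] [Module (MvPolynomial σ k) M] [Module k M]
      [IsScalarTower k (MvPolynomial σ k) M] [Module.Finite (MvPolynomial σ k) M]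
      (ℳ : ℕ → Submodule k M) [Decomposition ℳ]
      [SetLike.GradedSMul (homogeneousSubmodule σ k) ℳ],
      (∀ i ∉ s, ∀ m : M, (X i : MvPolynomial σ k) • m = 0) → HasHilbertPolynomial ℳ := by
  classical
  induction s using Finset.induction_on with
  | empty =>
    intro M _ _ _ _ _ ℳ _ _ h
    have := Module.Finite.of_forall_X_smul_eq_zero (fun i => h i (Finset.notMem_empty i))
    exact .of_finiteDimensional ℳ
  | insert i s _ ih =>
    intro M _ _ _ _ _ ℳ _ _ h
    let T := LinearMap.lsmul (MvPolynomial σ k) M (X i)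
    have hμ : ∀ t, ℳ t ≤ (ℳ (t + 1)).comap (T.restrictScalars k) := fun t m hm =>
      add_comm 1 t ▸ SetLike.GradedSMul.smul_mem
        ((mem_homogeneousSubmodule 1 _).2 (isHomogeneous_X k i)) hm
    set K := ker T
    set Q := range T
    have hι : range (K.subtype.restrictScalars k) = ker (T.restrictScalars k) := by
      rw [range_restrictScalars, ker_restrictScalars, Submodule.range_subtype]
    have hπ : ker (Q.mkQ.restrictScalars k) = range (T.restrictScalars k) := by
      rw [range_restrictScalars, ker_restrictScalars, Submodule.ker_mkQ]
    let := (isInternal_comap (𝒱 := ℳ) K.injective_subtype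
      (hι ▸ isHomogeneous_ker hμ)).chooseDecomposition
    let := (isInternal_map (𝒱 := ℳ) Q.mkQ_surjective
      (hπ ▸ isHomogeneous_range hμ)).chooseDecomposition
    have := SetLike.GradedSMul.comap (𝒜 := homogeneousSubmodule σ k) (ℳ := ℳ) K.subtype
    have := SetLike.GradedSMul.map (𝒜 := homogeneousSubmodule σ k) (ℳ := ℳ) Q.mkQ
    refine .of_comap_of_map hμ K.injective_subtype hι hπ (ih K _ fun l hl v => ?_)
      (ih (M ⧸ Q) _ fun l hl v => ?_)
    · obtain rfl | hli := eq_or_ne l i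
      · exact Subtype.ext v.2
      · exact Subtype.ext (h l (by simp [hli, hl]) v)
    · induction v using Submodule.Quotient.induction_on with | _ m
      rw [← Submodule.Quotient.mk_smul, Submodule.Quotient.mk_eq_zero]
      obtain rfl | hli := eq_or_ne l i
      · exact mem_range_self T m
      · simp [h l (by simp [hli, hl]) m]

theorem hasHilbertPolynomial_of_finite [Finite σ] (M : Type*) [AddCommGroup M]
    [Module (MvPolynomial σ k) M] [Module k M] [IsScalarTower k (MvPolynomial σ k) M]
    [Module.Finite (MvPolynomial σ k) M] (ℳ : ℕ → Submodule k M) [Decomposition ℳ]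
    [SetLike.GradedSMul (homogeneousSubmodule σ k) ℳ] : HasHilbertPolynomial ℳ := by
  have := Fintype.ofFinite σ
  exact hasHilbertPolynomial_of_forall_notMem_X_smul_eq_zero (Finset.univ : Finset σ) M ℳ
    fun i hi => absurd (Finset.mem_univ i) hi

end MvPolynomial

/-- existence of the Hilbert polynomial: for a finitely generated
graded module `M` over the standardly graded `S = k[x_0,…,x_n]`, there is a
polynomial `p ∈ ℚ[m]` and a bound `N` with `dim_k M_j = p(j)` for all `j ≥ N`. -/
theorem exists_hilbert_polynomial (k : Type*) [Field k] (n : ℕ)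
    (M : Type*) [AddCommGroup M] [Module (MvPolynomial (Fin (n + 1)) k) M]
    [Module k M] [IsScalarTower k (MvPolynomial (Fin (n + 1)) k) M]
    [Module.Finite (MvPolynomial (Fin (n + 1)) k) M]
    (ℳ : ℕ → Submodule k M) [DirectSum.Decomposition ℳ]
    (hsmul : ∀ (i j : ℕ) (s : MvPolynomial (Fin (n + 1)) k) (m : M),
      s.IsHomogeneous i → m ∈ ℳ j → s • m ∈ ℳ (i + j)) :
    ∃ (p : Polynomial ℚ) (N : ℕ), ∀ j ≥ N,
      (Module.finrank k (ℳ j) : ℚ) = p.eval (j : ℚ) := by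
  have : SetLike.GradedSMul (MvPolynomial.homogeneousSubmodule (Fin (n + 1)) k) ℳ :=
    ⟨fun i j s m hs hm => hsmul i j s m ((MvPolynomial.mem_homogeneousSubmodule i s).1 hs) hm⟩
  obtain ⟨p, hp⟩ := (hasHilbertPolynomial_of_finite (σ := Fin (n + 1)) M ℳ).2
  exact ⟨p, eventually_atTop.1 hp⟩
end
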